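/- Let T be a dyadic tree decomposition of [0,1]^n: a tree of dyadic cubes rooted at [0,1]^n such that children of any cube Q are subsets of Q, any two cubes in T are disjoint or nested, and for every Q ∈ T, μ(⋃_{B ∈ Child(Q)} B) < μ(Q)/4. Define f: [0,1]^n → ℝ by f = 1 on Q ∖ ⋃_{B ∈ Child(Q)} B when Q has even level, and f = 0 on Q ∖ ⋃_{B ∈ Child(Q)} B when Q has odd level. Then for any Q ∈ T of even level, (1/μ(Q)) ∫_Q f dμ ≥ 3/4, and for any Q ∈ T of odd level, (1/μ(Q)) ∫_Q f dμ ≤ 1/4. -/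

import Mathlib

open MeasureTheory

/-!
On `Q ∖ ⋃ Child(Q)` the function `f` is constant (`1` or `0`), and this set carries more than
three quarters of the mass of `Q`. Since `0 ≤ f ≤ 1`, the average of `f` over `Q` is therefore
within `1/4` of that constant.
-/

/-- The half-open dyadic cube of precision `r` at `a`. -/
noncomputable def dCube (n r : ℕ) (a : Fin n → ℤ) : Set (Fin n → ℝ) :=
  Set.univ.pi fun i => Set.Ico ((a i : ℝ) / 2 ^ r) (((a i : ℝ) + 1) / 2 ^ r)

section SetIntegralBounds

variable {α : Type*} [MeasurableSpace α] {μ : Measure α} {f : α → ℝ} {Q U : Set α}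

theorem measureReal_sub_le_setIntegral (hQ : MeasurableSet Q) (hU : MeasurableSet U)
    (hQfin : μ Q ≠ ⊤) (hUfin : μ U ≠ ⊤) (hf : IntegrableOn f Q μ)
    (hf_nonneg : ∀ x ∈ Q, 0 ≤ f x) (hf_one : ∀ x ∈ Q \ U, 1 ≤ f x) :
    μ.real Q - μ.real U ≤ ∫ x in Q, f x ∂μ :=
  calc μ.real Q - μ.real U ≤ 1 * μ.real (Q \ U) := by
        rw [one_mul]; exact le_measureReal_sdiff hUfin
    _ ≤ ∫ x in Q \ U, f x ∂μ :=
        setIntegral_ge_of_const_le_real (hQ.diff hU)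
          (measure_ne_top_of_subset Set.sdiff_subset hQfin) hf_one (hf.mono_set Set.sdiff_subset)
    _ ≤ ∫ x in Q, f x ∂μ :=
        setIntegral_mono_set hf (ae_restrict_of_forall_mem hQ hf_nonneg)
          (Filter.Eventually.of_forall Set.sdiff_subset)

theorem setIntegral_le_measureReal (hQ : MeasurableSet Q) (hU : MeasurableSet U)
    (hQfin : μ Q ≠ ⊤) (hUfin : μ U ≠ ⊤) (hf : IntegrableOn f Q μ)
    (hf_le_one : ∀ x ∈ Q, f x ≤ 1) (hf_zero : ∀ x ∈ Q \ U, f x ≤ 0) :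
    ∫ x in Q, f x ∂μ ≤ μ.real U := by
  have h := measureReal_sub_le_setIntegral (f := fun x => 1 - f x) hQ hU hQfin hUfin
    ((integrableOn_const hQfin).sub hf) (fun x hx => sub_nonneg.2 (hf_le_one x hx))
    (fun x hx => by linarith [hf_zero x hx])
  rw [integral_sub (f := fun _ => (1 : ℝ)) (integrableOn_const hQfin) hf, setIntegral_const,
    smul_eq_mul, mul_one] at h
  linarith

end SetIntegralBounds

theorem measurableSet_dCube (n r : ℕ) (a : Fin n → ℤ) : MeasurableSet (dCube n r a) :=
  MeasurableSet.univ_pi fun _ => measurableSet_Ico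

theorem volume_dCube (n r : ℕ) (a : Fin n → ℤ) :
    volume (dCube n r a) = ENNReal.ofReal (1 / 2 ^ r) ^ n := by
  have hside : ∀ i, ((a i : ℝ) + 1) / 2 ^ r - (a i : ℝ) / 2 ^ r = 1 / 2 ^ r := fun i => by ring
  simp [dCube, volume_pi_pi, Real.volume_Ico, hside]

theorem volume_dCube_pos (n r : ℕ) (a : Fin n → ℤ) : 0 < volume (dCube n r a) := by
  rw [volume_dCube]; exact ENNReal.pow_pos (ENNReal.ofReal_pos.2 (by positivity)) n

theorem volume_dCube_ne_top (n r : ℕ) (a : Fin n → ℤ) : volume (dCube n r a) ≠ ⊤ := by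
  rw [volume_dCube]; exact ENNReal.pow_ne_top ENNReal.ofReal_ne_top

theorem stmt12_general (n : ℕ) (ι : Type) [Countable ι]
    (cube : ι → Set (Fin n → ℝ)) (level : ι → ℕ) (children : ι → Set ι)
    (hdyadic : ∀ i, ∃ (r : ℕ) (a : Fin n → ℤ), cube i = dCube n r a)
    (hmeas : ∀ i, volume (⋃ j ∈ children i, cube j) < volume (cube i) / 4)
    (f : (Fin n → ℝ) → ℝ) (hfmeas : Measurable f)
    (hf01 : ∀ x, f x = 0 ∨ f x = 1)
    (hfdef : ∀ i, ∀ x ∈ cube i \ ⋃ j ∈ children i, cube j,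
      f x = if Even (level i) then 1 else 0) :
    ∀ i, (Even (level i) →
        (3 : ℝ) / 4 ≤ (∫ x in cube i, f x) / (volume (cube i)).toReal) ∧
      (¬ Even (level i) →
        (∫ x in cube i, f x) / (volume (cube i)).toReal ≤ 1 / 4) := by
  have hcube : ∀ j, MeasurableSet (cube j) ∧ 0 < volume (cube j) ∧ volume (cube j) ≠ ⊤ := by
    intro j
    obtain ⟨r, a, h⟩ := hdyadic j
    exact h ▸ ⟨measurableSet_dCube n r a, volume_dCube_pos n r a, volume_dCube_ne_top n r a⟩
  intro i
  obtain ⟨hQ, hQpos, hQfin⟩ := hcube i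
  have hU : MeasurableSet (⋃ j ∈ children i, cube j) :=
    .biUnion (Set.to_countable _) fun j _ => (hcube j).1
  have hUfin : volume (⋃ j ∈ children i, cube j) ≠ ⊤ := ((hmeas i).trans_le le_top).ne
  have hU_small : volume.real (⋃ j ∈ children i, cube j) < volume.real (cube i) / 4 := by
    have := ENNReal.toReal_strict_mono (ENNReal.div_ne_top hQfin (by norm_num)) (hmeas i)
    rwa [ENNReal.toReal_div, ENNReal.toReal_ofNat] at this
  have hf_bounds : ∀ x, 0 ≤ f x ∧ f x ≤ 1 := fun x => by rcases hf01 x with h | h <;> simp [h]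
  have hf : IntegrableOn f (cube i) :=
    .of_bound hQfin.lt_top hfmeas.aestronglyMeasurable 1
      (ae_of_all _ fun x => by rcases hf01 x with h | h <;> simp [h])
  have hV : 0 < volume.real (cube i) := ENNReal.toReal_pos hQpos.ne' hQfin
  rw [← measureReal_def]
  refine ⟨fun hev => ?_, fun hodd => ?_⟩
  · have := measureReal_sub_le_setIntegral hQ hU hQfin hUfin hf (fun x _ => (hf_bounds x).1)
      fun x hx => by rw [hfdef i x hx, if_pos hev]
    rw [le_div_iff₀ hV]
    linarith
  · have := setIntegral_le_measureReal hQ hU hQfin hUfin hf (fun x _ => (hf_bounds x).2)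
      fun x hx => by rw [hfdef i x hx, if_neg hodd]
    rw [div_le_iff₀ hV]
    linarith

/-- for a dyadic tree decomposition (children contained in their parent,
cubes disjoint or nested, `μ(⋃ Child(Q)) < μ(Q)/4`) and `f` equal to `1` on
`Q ∖ ⋃ Child(Q)` for even-level `Q` and `0` there for odd-level `Q` (with values in
`{0,1}`), the average of `f` over any even-level cube is `≥ 3/4` and over any
odd-level cube is `≤ 1/4`. -/
theorem stmt12 (n : ℕ) (ι : Type) [Countable ι]
    (cube : ι → Set (Fin n → ℝ)) (level : ι → ℕ) (children : ι → Set ι)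
    (hdyadic : ∀ i, ∃ (r : ℕ) (a : Fin n → ℤ), cube i = dCube n r a)
    (hroot : ∃ i0, cube i0 = dCube n 0 0 ∧ level i0 = 0)
    (hchild_sub : ∀ i, ∀ j ∈ children i, cube j ⊆ cube i)
    (hchild_level : ∀ i, ∀ j ∈ children i, level j = level i + 1)
    (hnest : ∀ i j, cube i ∩ cube j = ∅ ∨ cube i ⊆ cube j ∨ cube j ⊆ cube i)
    (hmeas : ∀ i, volume (⋃ j ∈ children i, cube j) < volume (cube i) / 4)
    (f : (Fin n → ℝ) → ℝ) (hfmeas : Measurable f)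
    (hf01 : ∀ x, f x = 0 ∨ f x = 1)
    (hfdef : ∀ i, ∀ x ∈ cube i \ ⋃ j ∈ children i, cube j,
      f x = if Even (level i) then 1 else 0) :
    ∀ i, (Even (level i) →
        (3 : ℝ) / 4 ≤ (∫ x in cube i, f x) / (volume (cube i)).toReal) ∧
      (¬ Even (level i) →
        (∫ x in cube i, f x) / (volume (cube i)).toReal ≤ 1 / 4) :=
  stmt12_general n ι cube level children hdyadic hmeas f hfmeas hf01 hfdef
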